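/- arXiv:2005.03612 — 2 statements merged into one kernel-verified Lean document; each statement's English description precedes it below -/
import Mathlib

section
/- Let Y, Z1, Z2, Z3, Z4, Z5 ∈ ℝ³ and suppose ⟨Y Zi Zj⟩ ≠ 0 for all i ≠ j in {1,…,5}. Then ⟨Z1 Z2 Z3⟩²/(⟨Y Z1 Z2⟩·⟨Y Z2 Z3⟩·⟨Y Z3 Z1⟩) + ⟨Z1 Z3 Z4⟩²/(⟨Y Z1 Z3⟩·⟨Y Z3 Z4⟩·⟨Y Z4 Z1⟩) + ⟨Z1 Z4 Z5⟩²/(⟨Y Z1 Z4⟩·⟨Y Z4 Z5⟩·⟨Y Z5 Z1⟩) = ⟨Z2 Z3 Z4⟩²/(⟨Y Z2 Z3⟩·⟨Y Z3 Z4⟩·⟨Y Z4 Z2⟩) + ⟨Z2 Z4 Z5⟩²/(⟨Y Z2 Z4⟩·⟨Y Z4 Z5⟩·⟨Y Z5 Z2⟩) + ⟨Z2 Z5 Z1⟩²/(⟨Y Z2 Z5⟩·⟨Y Z5 Z1⟩·⟨Y Z1 Z2⟩). -/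
/-!
Two triangulations of a quadrilateral `abcd` related by a flip give the same canonical function:
`Ω(abc) + Ω(acd) = Ω(abd) + Ω(bcd)`. After clearing denominators this is a polynomial identity
in the brackets, which follows from the three-term Grassmann–Plücker relations. The fan
triangulation of the pentagon from `Z₁` turns into the fan from `Z₂` by two such flips, trading
the diagonal `Z₁Z₃` for `Z₂Z₄` and then `Z₁Z₄` for `Z₂Z₅` (the vertices are `Z 0, …, Z 4` below).
-/

noncomputable def det3 (a b c : Fin 3 → ℝ) : ℝ := Matrix.det (Matrix.of ![a, b, c])

lemma det3_eq (a b c : Fin 3 → ℝ) : det3 a b c =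
    a 0 * b 1 * c 2 - a 0 * b 2 * c 1 - a 1 * b 0 * c 2 + a 1 * b 2 * c 0
      + a 2 * b 0 * c 1 - a 2 * b 1 * c 0 := by
  simp [det3, Matrix.det_fin_three]

lemma det3_swap_left (a b c : Fin 3 → ℝ) : det3 b a c = -det3 a b c := by
  simp only [det3_eq]; ring

lemma det3_swap_right (a b c : Fin 3 → ℝ) : det3 a c b = -det3 a b c := by
  simp only [det3_eq]; ring

lemma det3_cycle (a b c : Fin 3 → ℝ) : det3 b c a = det3 a b c := by
  simp only [det3_eq]; ring

lemma det3_plucker (x a b c d : Fin 3 → ℝ) :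
    det3 x a b * det3 x c d - det3 x a c * det3 x b d + det3 x a d * det3 x b c = 0 := by
  simp only [det3_eq]; ring

lemma det3_quadrilateral_identity (Y a b c d : Fin 3 → ℝ) (hp : det3 Y a b ≠ 0) :
    det3 a b c ^ 2 * det3 Y a d * det3 Y b d * det3 Y c d
      + det3 a c d ^ 2 * det3 Y a b * det3 Y b c * det3 Y b d
    = det3 a b d ^ 2 * det3 Y a c * det3 Y b c * det3 Y c d
      + det3 b c d ^ 2 * det3 Y a b * det3 Y a c * det3 Y a d := by
  have plucker_a := det3_plucker a Y b c d
  rw [det3_swap_left Y a b, det3_swap_left Y a c, det3_swap_left Y a d] at plucker_a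
  have plucker_b := det3_plucker b Y a c d
  rw [det3_swap_left Y b a, det3_swap_right Y a b, det3_swap_left Y b c, det3_swap_left a b d,
    det3_swap_left Y b d, det3_swap_left a b c] at plucker_b
  have plucker_Y := det3_plucker Y a b c d
  refine mul_left_cancel₀ (pow_ne_zero 2 hp) ?_
  -- The three relations rewrite `⟨Yab⟩⟨acd⟩`, `⟨Yab⟩⟨bcd⟩` and `⟨Yab⟩⟨Ycd⟩` in the other
  -- brackets; after that substitution the two sides agree identically.
  linear_combination
    (-det3 Y a b * det3 Y b c * det3 Y b d *
        (det3 Y a c * det3 a b d - det3 Y a d * det3 a b c + det3 Y a b * det3 a c d)) * plucker_a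
    - det3 Y a b * det3 Y a c * det3 Y a d *
        (det3 Y b c * det3 a b d - det3 Y b d * det3 a b c + det3 Y a b * det3 b c d) * plucker_b
    + det3 Y a b * (det3 a b c ^ 2 * det3 Y a d * det3 Y b d
        - det3 a b d ^ 2 * det3 Y a c * det3 Y b c) * plucker_Y

noncomputable def canonicalFunction (Y a b c : Fin 3 → ℝ) : ℝ :=
  det3 a b c ^ 2 / (det3 Y a b * det3 Y b c * det3 Y c a)

lemma canonicalFunction_cycle (Y a b c : Fin 3 → ℝ) :
    canonicalFunction Y b c a = canonicalFunction Y a b c := by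
  rw [canonicalFunction, canonicalFunction, det3_cycle, mul_rotate (det3 Y a b)]

lemma canonicalFunction_add_flip (Y a b c d : Fin 3 → ℝ)
    (hab : det3 Y a b ≠ 0) (hac : det3 Y a c ≠ 0) (had : det3 Y a d ≠ 0)
    (hbc : det3 Y b c ≠ 0) (hbd : det3 Y b d ≠ 0) (hcd : det3 Y c d ≠ 0) :
    canonicalFunction Y a b c + canonicalFunction Y a c d
      = canonicalFunction Y a b d + canonicalFunction Y b c d := by
  simp only [canonicalFunction]
  rw [det3_swap_right Y a c, det3_swap_right Y a d, det3_swap_right Y b d]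
  field_simp
  linear_combination -det3_quadrilateral_identity Y a b c d hab

theorem stmt_9 (Y : Fin 3 → ℝ) (Z : Fin 5 → (Fin 3 → ℝ))
    (h : ∀ i j : Fin 5, i ≠ j → det3 Y (Z i) (Z j) ≠ 0) :
    det3 (Z 0) (Z 1) (Z 2) ^ 2 /
        (det3 Y (Z 0) (Z 1) * det3 Y (Z 1) (Z 2) * det3 Y (Z 2) (Z 0)) +
      det3 (Z 0) (Z 2) (Z 3) ^ 2 /
        (det3 Y (Z 0) (Z 2) * det3 Y (Z 2) (Z 3) * det3 Y (Z 3) (Z 0)) +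
      det3 (Z 0) (Z 3) (Z 4) ^ 2 /
        (det3 Y (Z 0) (Z 3) * det3 Y (Z 3) (Z 4) * det3 Y (Z 4) (Z 0)) =
    det3 (Z 1) (Z 2) (Z 3) ^ 2 /
        (det3 Y (Z 1) (Z 2) * det3 Y (Z 2) (Z 3) * det3 Y (Z 3) (Z 1)) +
      det3 (Z 1) (Z 3) (Z 4) ^ 2 /
        (det3 Y (Z 1) (Z 3) * det3 Y (Z 3) (Z 4) * det3 Y (Z 4) (Z 1)) +
      det3 (Z 1) (Z 4) (Z 0) ^ 2 /
        (det3 Y (Z 1) (Z 4) * det3 Y (Z 4) (Z 0) * det3 Y (Z 0) (Z 1)) := by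
  show canonicalFunction Y (Z 0) (Z 1) (Z 2) + canonicalFunction Y (Z 0) (Z 2) (Z 3)
      + canonicalFunction Y (Z 0) (Z 3) (Z 4)
    = canonicalFunction Y (Z 1) (Z 2) (Z 3) + canonicalFunction Y (Z 1) (Z 3) (Z 4)
      + canonicalFunction Y (Z 1) (Z 4) (Z 0)
  have flip_Z0Z2 := canonicalFunction_add_flip Y (Z 0) (Z 1) (Z 2) (Z 3)
    (h 0 1 (by decide)) (h 0 2 (by decide)) (h 0 3 (by decide))
    (h 1 2 (by decide)) (h 1 3 (by decide)) (h 2 3 (by decide))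
  have flip_Z0Z3 := canonicalFunction_add_flip Y (Z 0) (Z 1) (Z 3) (Z 4)
    (h 0 1 (by decide)) (h 0 3 (by decide)) (h 0 4 (by decide))
    (h 1 3 (by decide)) (h 1 4 (by decide)) (h 3 4 (by decide))
  rw [canonicalFunction_cycle Y (Z 0) (Z 1) (Z 4)]
  linarith
end

section
/- Let Z1, Z2, Z3, Z4, Z5, Y ∈ ℝ³ with ⟨Z3 Z4 Z5⟩ ≠ 0 and ⟨Z1 Z3 Z4⟩ ≠ 0. For x1, x2 ∈ ℝ define c1 := x1, c2 := x2, c3 := (⟨Y Z4 Z5⟩ − x1·⟨Z1 Z4 Z5⟩ − x2·⟨Z2 Z4 Z5⟩)/⟨Z3 Z4 Z5⟩, c4 := (x1·⟨Z1 Z3 Z5⟩ + x2·⟨Z2 Z3 Z5⟩ − ⟨Y Z3 Z5⟩)/⟨Z3 Z4 Z5⟩, c5 := (⟨Y Z3 Z4⟩ − x1·⟨Z1 Z3 Z4⟩ − x2·⟨Z2 Z3 Z4⟩)/⟨Z3 Z4 Z5⟩. Then at the point x1 := ⟨Y Z3 Z4⟩/⟨Z1 Z3 Z4⟩, x2 :=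 0 one has c2 = 0, c5 = 0, c1 = ⟨Y Z3 Z4⟩/⟨Z1 Z3 Z4⟩, c3 = ⟨Y Z4 Z1⟩/⟨Z1 Z3 Z4⟩ and c4 = ⟨Y Z1 Z3⟩/⟨Z1 Z3 Z4⟩; consequently, with J := ⟨Z1 Z3 Z4⟩/⟨Z3 Z4 Z5⟩, one has J · c1 · c3 · c4 = ⟨Y Z1 Z3⟩ · ⟨Y Z3 Z4⟩ · ⟨Y Z4 Z1⟩ / (⟨Z3 Z4 Z5⟩ · ⟨Z1 Z3 Z4⟩²) at that point. -/
lemma det3_expand (a b c : Fin 3 → ℝ) :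
    det3 a b c = a 0 * (b 1 * c 2 - b 2 * c 1) - a 1 * (b 0 * c 2 - b 2 * c 0)
      + a 2 * (b 0 * c 1 - b 1 * c 0) := by
  simp [det3, Matrix.det_fin_three]; ring

lemma plucker1 (Z1 Z3 Z4 Z5 Y : Fin 3 → ℝ) :
    det3 Y Z4 Z5 * det3 Z1 Z3 Z4 - det3 Y Z3 Z4 * det3 Z1 Z4 Z5
      = det3 Y Z4 Z1 * det3 Z3 Z4 Z5 := by
  simp only [det3_expand]; ring

lemma plucker2 (Z1 Z3 Z4 Z5 Y : Fin 3 → ℝ) :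
    det3 Y Z3 Z4 * det3 Z1 Z3 Z5 - det3 Y Z3 Z5 * det3 Z1 Z3 Z4
      = det3 Y Z1 Z3 * det3 Z3 Z4 Z5 := by
  simp only [det3_expand]; ring

theorem stmt_11 (Z1 Z2 Z3 Z4 Z5 Y : Fin 3 → ℝ)
    (h345 : det3 Z3 Z4 Z5 ≠ 0) (h134 : det3 Z1 Z3 Z4 ≠ 0) :
    let x1 := det3 Y Z3 Z4 / det3 Z1 Z3 Z4
    let x2 : ℝ := 0
    let c1 := x1
    let c2 := x2
    let c3 := (det3 Y Z4 Z5 - x1 * det3 Z1 Z4 Z5 - x2 * det3 Z2 Z4 Z5) / det3 Z3 Z4 Z5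
    let c4 := (x1 * det3 Z1 Z3 Z5 + x2 * det3 Z2 Z3 Z5 - det3 Y Z3 Z5) / det3 Z3 Z4 Z5
    let c5 := (det3 Y Z3 Z4 - x1 * det3 Z1 Z3 Z4 - x2 * det3 Z2 Z3 Z4) / det3 Z3 Z4 Z5
    let J := det3 Z1 Z3 Z4 / det3 Z3 Z4 Z5
    c2 = 0 ∧ c5 = 0 ∧
    c1 = det3 Y Z3 Z4 / det3 Z1 Z3 Z4 ∧
    c3 = det3 Y Z4 Z1 / det3 Z1 Z3 Z4 ∧
    c4 = det3 Y Z1 Z3 / det3 Z1 Z3 Z4 ∧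
    J * c1 * c3 * c4 =
      det3 Y Z1 Z3 * det3 Y Z3 Z4 * det3 Y Z4 Z1 /
        (det3 Z3 Z4 Z5 * det3 Z1 Z3 Z4 ^ 2) := by
  intro x1 x2 c1 c2 c3 c4 c5 J
  have key1 := plucker1 Z1 Z3 Z4 Z5 Y
  have key2 := plucker2 Z1 Z3 Z4 Z5 Y
  have h3 : c3 = det3 Y Z4 Z1 / det3 Z1 Z3 Z4 := by
    show (det3 Y Z4 Z5 - det3 Y Z3 Z4 / det3 Z1 Z3 Z4 * det3 Z1 Z4 Z5 - 0 * det3 Z2 Z4 Z5)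
        / det3 Z3 Z4 Z5 = _
    rw [div_eq_div_iff h345 h134]
    field_simp
    linear_combination key1
  have h4 : c4 = det3 Y Z1 Z3 / det3 Z1 Z3 Z4 := by
    show (det3 Y Z3 Z4 / det3 Z1 Z3 Z4 * det3 Z1 Z3 Z5 + 0 * det3 Z2 Z3 Z5 - det3 Y Z3 Z5)
        / det3 Z3 Z4 Z5 = _
    rw [div_eq_div_iff h345 h134]
    field_simp
    linear_combination key2
  refine ⟨rfl, ?_, rfl, h3, h4, ?_⟩
  · show (det3 Y Z3 Z4 - det3 Y Z3 Z4 / det3 Z1 Z3 Z4 * det3 Z1 Z3 Z4 - 0 * det3 Z2 Z3 Z4)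
        / det3 Z3 Z4 Z5 = 0
    rw [div_mul_cancel₀ _ h134]
    simp
  · rw [h3, h4]
    show det3 Z1 Z3 Z4 / det3 Z3 Z4 Z5 * (det3 Y Z3 Z4 / det3 Z1 Z3 Z4) * _ * _ = _
    field_simp
end
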